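/- Under the greedy red/blue coloring of a 1324-avoiding permutation, the subsequence of blue entries avoids the pattern 213. -/

import Mathlib

inductive Letter | A | B | C | D
deriving DecidableEq

def NoCB (w : List Letter) : Prop :=
  List.Chain' (fun a b => ¬(a = Letter.C ∧ b = Letter.B)) w

noncomputable def hword (n : ℕ) : ℕ :=
  Nat.card {w : List Letter // w.length = n ∧ NoCB w}
def redCond (p : ℕ → ℕ) (c : List Bool) (i : ℕ) : Bool :=
  decide (¬ ∃ j < i, ∃ k < i, j < k ∧ c.getD j false = true ∧ c.getD k false = true ∧
      p j < p i ∧ p i < p k) &&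
  decide (¬ ∃ j < i, c.getD j false = false ∧ p j < p i)

def colorsAux (p : ℕ → ℕ) : ℕ → List Bool
  | 0 => []
  | i+1 => colorsAux p i ++ [redCond p (colorsAux p i) i]

/-- `isRed p i = true` iff the greedy procedure colors the entry in position `i` red. -/
def isRed (p : ℕ → ℕ) (i : ℕ) : Bool := (colorsAux p (i+1)).getD i false

/-- The type of the entry in position `i` of a permutation of `{0,...,n-1}`:
`A` = red left-to-right minimum of the red subsequence, `B` = other red,
`D` = blue right-to-left maximum of the blue subsequence, `C` = other blue. -/
def typeOf (n : ℕ) (p : ℕ → ℕ) (i : ℕ) : Letter :=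
  if isRed p i then
    if ∀ j < i, isRed p j = true → p i < p j then Letter.A else Letter.B
  else
    if ∀ j < n, i < j → isRed p j = false → p j < p i then Letter.D else Letter.C

def toNatFun {n : ℕ} (p : Equiv.Perm (Fin n)) : ℕ → ℕ :=
  fun i => if h : i < n then (p ⟨i, h⟩ : ℕ) else i

def Avoids1324 {n : ℕ} (p : Equiv.Perm (Fin n)) : Prop :=
  ¬ ∃ i₁ i₂ i₃ i₄ : Fin n, i₁ < i₂ ∧ i₂ < i₃ ∧ i₃ < i₄ ∧
    p i₁ < p i₃ ∧ p i₃ < p i₂ ∧ p i₂ < p i₄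

/-- The word `w(p)`: types by position. -/
def wWord {n : ℕ} (p : Equiv.Perm (Fin n)) (i : Fin n) : Letter :=
  typeOf n (toNatFun p) i

/-- The word `z(p)`: types by value. -/
def zWord {n : ℕ} (p : Equiv.Perm (Fin n)) (v : Fin n) : Letter :=
  typeOf n (toNatFun p) (p.symm v)

/-!
In a blue 213 occurrence `i < j < k`, every entry left of `i` exceeds `p j`, since otherwise it
would start a 1324 with `i, j, k`. Now ask why `j` is blue. A smaller blue entry before `j` would
sit between `i` and `j` and give a blue 213 with a smaller middle entry. So `j` completes a red
132 `x' < y' < j`, and avoiding 1324 forces `i < x'` and `p k < p y'`. Next ask why `i` is blue. A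
red 132 `x < y < i` cannot be it: `p y < p y'`, as otherwise `x, y, y'` would be a red 132, and
then `x, y, i, y'` is a 1324. So there is a blue `z < i` with `p z < p i`, and `z, j, k` is a blue
213 with a smaller first entry. Each step lowers `i + j`, so there is no occurrence at all.
-/

open Function

lemma colorsAux_length (f : ℕ → ℕ) (m : ℕ) : (colorsAux f m).length = m := by
  induction m with
  | zero => rfl
  | succ m ih => simp [colorsAux, ih]

lemma isRed_eq_redCond (f : ℕ → ℕ) (i : ℕ) : isRed f i = redCond f (colorsAux f i) i := by
  rw [isRed, colorsAux, List.getD_append_right _ _ _ _ (colorsAux_length f i).le]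
  simp [colorsAux_length]

lemma colorsAux_getD (f : ℕ → ℕ) {i m : ℕ} (h : i < m) :
    (colorsAux f m).getD i false = isRed f i := by
  induction m with
  | zero => omega
  | succ m ih =>
    rcases (Nat.lt_succ_iff_lt_or_eq.mp h) with h | rfl
    · rw [colorsAux, List.getD_append _ _ _ _ (by rwa [colorsAux_length])]
      exact ih h
    · rfl

lemma isRed_eq_true_iff (f : ℕ → ℕ) (i : ℕ) :
    isRed f i = true ↔
      (¬ ∃ a < i, ∃ b < i, a < b ∧ isRed f a = true ∧ isRed f b = true ∧ f a < f i ∧ f i < f b) ∧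
      ¬ ∃ a < i, isRed f a = false ∧ f a < f i := by
  rw [isRed_eq_redCond]
  simp only [redCond, Bool.and_eq_true, decide_eq_true_eq]
  have hc : ∀ a < i, (colorsAux f i).getD a false = isRed f a := fun a ha => colorsAux_getD f ha
  refine and_congr (not_congr ?_) (not_congr ?_)
  · refine exists_congr fun a => and_congr_right fun ha => exists_congr fun b =>
      and_congr_right fun hb => ?_
    rw [hc a ha, hc b hb]
  · exact exists_congr fun a => and_congr_right fun ha => by rw [hc a ha]

lemma isRed_eq_false_iff (f : ℕ → ℕ) (i : ℕ) :
    isRed f i = false ↔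
      (∃ a < i, ∃ b < i, a < b ∧ isRed f a = true ∧ isRed f b = true ∧ f a < f i ∧ f i < f b) ∨
      ∃ a < i, isRed f a = false ∧ f a < f i := by
  rw [← Bool.not_eq_true, isRed_eq_true_iff, not_and_or, not_not, not_not]

lemma not_lt_of_isRed {f : ℕ → ℕ} {a b c : ℕ} (hc : isRed f c = true) (hab : a < b) (hbc : b < c)
    (ha : isRed f a = true) (hb : isRed f b = true) (hac : f a < f c) : ¬ f c < f b :=
  fun hcb => ((isRed_eq_true_iff f c).mp hc).1 ⟨a, hab.trans hbc, b, hbc, hab, ha, hb, hac, hcb⟩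

def Avoids1324Below (f : ℕ → ℕ) (n : ℕ) : Prop :=
  ∀ a b c d, a < b → b < c → c < d → d < n → ¬(f a < f c ∧ f c < f b ∧ f b < f d)

namespace Avoids1324Below

variable {f : ℕ → ℕ} {n a b c d : ℕ}

lemma third_lt_first (hf : Injective f) (hp : Avoids1324Below f n) (hab : a < b) (hbc : b < c)
    (hcd : c < d) (hdn : d < n) (hcb : f c < f b) (hbd : f b < f d) : f c < f a :=
  lt_of_le_of_ne (not_lt.mp fun hac => hp a b c d hab hbc hcd hdn ⟨hac, hcb, hbd⟩)
    (hf.ne (by omega))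

lemma fourth_lt_second (hf : Injective f) (hp : Avoids1324Below f n) (hab : a < b) (hbc : b < c)
    (hcd : c < d) (hdn : d < n) (hac : f a < f c) (hcb : f c < f b) : f d < f b :=
  lt_of_le_of_ne (not_lt.mp fun hbd => hp a b c d hab hbc hcd hdn ⟨hac, hcb, hbd⟩)
    (hf.ne (by omega))

end Avoids1324Below

structure IsBlue213 (f : ℕ → ℕ) (i j k : ℕ) : Prop where
  lt₁₂ : i < j
  lt₂₃ : j < k
  blue₁ : isRed f i = false
  blue₂ : isRed f j = false
  blue₃ : isRed f k = false
  val₂₁ : f j < f i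
  val₁₃ : f i < f k

namespace IsBlue213

variable {f : ℕ → ℕ} {n i j k : ℕ}

lemma exists_smaller (hf : Injective f) (hp : Avoids1324Below f n) (hkn : k < n)
    (h : IsBlue213 f i j k) : (∃ z < j, IsBlue213 f i z k) ∨ ∃ z < i, IsBlue213 f z j k := by
  obtain ⟨hij, hjk, hi, hj, hk, hji, hik⟩ := h
  have left_of_i : ∀ t < i, f j < f t := fun t ht =>
    hp.third_lt_first hf ht hij hjk hkn hji hik
  rcases (isRed_eq_false_iff f j).mp hj with
    ⟨x, -, y, hyj, hxy, hx, hy, hxj, hjy⟩ | ⟨z, hzj, hz, hzj'⟩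
  · have hix : i < x := by
      rcases lt_trichotomy x i with hxi | rfl | hix
      · exact absurd (left_of_i x hxi) hxj.not_gt
      · simp [hi] at hx
      · exact hix
    have hky : f k < f y := hp.fourth_lt_second hf hxy hyj hjk hkn hxj hjy
    rcases (isRed_eq_false_iff f i).mp hi with
      ⟨a, -, b, hbi, hab, ha, hb, hai, hib⟩ | ⟨z, hzi, hz, hzi'⟩
    · exact absurd (hp.fourth_lt_second hf hab hbi (hix.trans hxy) (by omega) hai hib)
        (not_lt_of_isRed hy hab (by omega) ha hb (by omega))
    · exact Or.inr ⟨z, hzi, ⟨hzi.trans hij, hjk, hz, hj, hk, left_of_i z hzi, by omega⟩⟩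
  · have hiz : i < z := by
      rcases lt_trichotomy z i with hzi | rfl | hiz
      · exact absurd (left_of_i z hzi) hzj'.not_gt
      · exact absurd hji hzj'.not_gt
      · exact hiz
    exact Or.inl ⟨z, hzj, ⟨hiz, hzj.trans hjk, hi, hz, hk, by omega, by omega⟩⟩

end IsBlue213

theorem not_isBlue213 {f : ℕ → ℕ} {n i j k : ℕ} (hf : Injective f) (hp : Avoids1324Below f n)
    (hkn : k < n) : ¬ IsBlue213 f i j k := fun h =>
  match h.exists_smaller hf hp hkn with
  | .inl ⟨_, _, h'⟩ => not_isBlue213 hf hp hkn h'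
  | .inr ⟨_, _, h'⟩ => not_isBlue213 hf hp hkn h'
termination_by i + j

lemma toNatFun_val {n : ℕ} (p : Equiv.Perm (Fin n)) (i : Fin n) : toNatFun p i = p i := by
  simp [toNatFun]

lemma toNatFun_injective {n : ℕ} (p : Equiv.Perm (Fin n)) : Injective (toNatFun p) := by
  intro a b h
  simp only [toNatFun] at h
  split_ifs at h with ha hb hb
  · simpa using p.injective (Fin.ext h)
  · have := (p ⟨a, ha⟩).isLt; omega
  · have := (p ⟨b, hb⟩).isLt; omega
  · exact h

lemma Avoids1324.avoids1324Below_toNatFun {n : ℕ} {p : Equiv.Perm (Fin n)} (hp : Avoids1324 p) :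
    Avoids1324Below (toNatFun p) n := by
  intro a b c d hab hbc hcd hdn hpat
  have e : ∀ x (hx : x < n), toNatFun p x = p ⟨x, hx⟩ := fun x hx => dif_pos hx
  rw [e a (by omega), e b (by omega), e c (by omega), e d hdn] at hpat
  exact hp ⟨_, _, _, _, hab, hbc, hcd, hpat⟩

/-- The blue subsequence of a 1324-avoiding permutation avoids 213. -/
theorem stmt8 {n : ℕ} (p : Equiv.Perm (Fin n)) (hp : Avoids1324 p) :
    ∀ i j k : Fin n, i < j → j < k →
      isRed (toNatFun p) i = false → isRed (toNatFun p) j = false →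
      isRed (toNatFun p) k = false →
      ¬(p j < p i ∧ p i < p k) := by
  rintro i j k hij hjk hi hj hk ⟨hji, hik⟩
  refine not_isBlue213 (toNatFun_injective p) hp.avoids1324Below_toNatFun k.isLt
    ⟨hij, hjk, hi, hj, hk, ?_, ?_⟩ <;> simpa [toNatFun_val]
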